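/- Let G be a totally disconnected locally compact group, α a continuous endomorphism of G, and U a compact open subgroup of G. If U is tidy for α, then U is tidy for α^k for every k ≥ 1. -/

import Mathlib

open Pointwise Subgroup Filter

variable {G : Type*}

/-- The `n`-fold iterate of an endomorphism `α : G →* G`, as a monoid homomorphism. -/
def iterHom [Group G] (α : G →* G) : ℕ → G →* G
  | 0 => MonoidHom.id G
  | n + 1 => α.comp (iterHom α n)

/-- The descending sequence `U_0 = U`, `U_{n+1} = U ⊓ α(U_n)`. -/
def seqU [Group G] (α : G →* G) (U : Subgroup G) : ℕ → Subgroup G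
  | 0 => U
  | n + 1 => U ⊓ Subgroup.map α (seqU α U n)

/-- `U₊ = ⋂ₙ Uₙ`. -/
def Uplus [Group G] (α : G →* G) (U : Subgroup G) : Subgroup G := ⨅ n, seqU α U n

/-- `U₋ = ⋂ₙ α^{-n}(U)`. -/
def Uminus [Group G] (α : G →* G) (U : Subgroup G) : Subgroup G :=
  ⨅ n, Subgroup.comap (iterHom α n) U

/-- `U₊₊ = ⋃ₙ αⁿ(U₊)` as a subset of `G`. -/
def Upp [Group G] (α : G →* G) (U : Subgroup G) : Set G :=
  ⋃ n, iterHom α n '' (Uplus α U : Set G)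

/-- `U₋₋ = ⋃ₙ α^{-n}(U₋)` as a subset of `G`. -/
def Umm [Group G] (α : G →* G) (U : Subgroup G) : Set G :=
  ⋃ n, iterHom α n ⁻¹' (Uminus α U : Set G)

/-- `U₋ₙ = ⋂_{k=0}^{n} α^{-k}(U)`. -/
def Uneg [Group G] (α : G →* G) (U : Subgroup G) (n : ℕ) : Subgroup G :=
  ⨅ k ∈ Finset.range (n + 1), Subgroup.comap (iterHom α k) U

/-- `U` is tidy above for `α` if `U = U₊U₋`. -/
def TidyAbove [Group G] (α : G →* G) (U : Subgroup G) : Prop :=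
  (U : Set G) = (Uplus α U : Set G) * (Uminus α U : Set G)

/-- `U` is tidy below for `α` if `U₋₋` is closed. -/
def TidyBelow [Group G] [TopologicalSpace G] (α : G →* G) (U : Subgroup G) : Prop :=
  IsClosed (Umm α U)

/-- `U` is tidy for `α` if it is tidy above and tidy below for `α`. -/
def Tidy [Group G] [TopologicalSpace G] (α : G →* G) (U : Subgroup G) : Prop :=
  TidyAbove α U ∧ TidyBelow α U

/-- The scale of `α`: the minimum of `[α(V) : α(V) ∩ V]` over compact open subgroups `V`. -/
noncomputable def scale [Group G] [TopologicalSpace G] (α : G →* G) : ℕ :=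
  sInf {n : ℕ | ∃ V : Subgroup G, IsCompact (V : Set G) ∧ IsOpen (V : Set G) ∧
    n = Subgroup.relIndex V (Subgroup.map α V)}

/-! ### Auxiliary lemmas -/

section Aux

variable [Group G]

lemma iterHom_zero' (α : G →* G) : iterHom α 0 = MonoidHom.id G := rfl
lemma iterHom_succ' (α : G →* G) (n : ℕ) : iterHom α (n+1) = α.comp (iterHom α n) := rfl

lemma iterHom_add (α : G →* G) (m n : ℕ) :
    iterHom α (m + n) = (iterHom α m).comp (iterHom α n) := by
  induction m with
  | zero => simp [iterHom]
  | succ m ih =>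
      rw [Nat.succ_add, iterHom_succ', ih, iterHom_succ', MonoidHom.comp_assoc]

lemma iterHom_add_apply (α : G →* G) (m n : ℕ) (x : G) :
    iterHom α (m + n) x = iterHom α m (iterHom α n x) := by
  rw [iterHom_add]; rfl

lemma iterHom_iterHom (α : G →* G) (k n : ℕ) :
    iterHom (iterHom α k) n = iterHom α (k * n) := by
  induction n with
  | zero => simp [iterHom]
  | succ n ih =>
      rw [iterHom_succ', ih, ← iterHom_add]
      congr 1
      ring

lemma mem_Uminus {α : G →* G} {U : Subgroup G} {x : G} :
    x ∈ Uminus α U ↔ ∀ n, iterHom α n x ∈ U := by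
  simp [Uminus, Subgroup.mem_iInf, Subgroup.mem_comap]

lemma Uminus_le {α : G →* G} {U : Subgroup G} : Uminus α U ≤ U := by
  intro x hx
  exact mem_Uminus.1 hx 0

lemma iterHom_mem_Uminus {α : G →* G} {U : Subgroup G} {x : G} (hx : x ∈ Uminus α U) (m : ℕ) :
    iterHom α m x ∈ Uminus α U := by
  rw [mem_Uminus]
  intro n
  rw [← iterHom_add_apply]
  exact mem_Uminus.1 hx (n + m)

lemma seqU_le {α : G →* G} {U : Subgroup G} : ∀ n, seqU α U n ≤ U
  | 0 => le_rfl
  | n + 1 => inf_le_left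

lemma seqU_antitone {α : G →* G} {U : Subgroup G} : ∀ n, seqU α U (n + 1) ≤ seqU α U n
  | 0 => inf_le_left
  | n + 1 => inf_le_inf le_rfl (Subgroup.map_mono (seqU_antitone n))

lemma mem_Uplus {α : G →* G} {U : Subgroup G} {x : G} :
    x ∈ Uplus α U ↔ ∀ n, x ∈ seqU α U n := by
  simp [Uplus, Subgroup.mem_iInf]

lemma Uplus_le {α : G →* G} {U : Subgroup G} : Uplus α U ≤ U := fun x hx =>
  mem_Uplus.1 hx 0

end Aux

/-! ### Topological lemmas -/

section Top

variable [Group G] [TopologicalSpace G] [IsTopologicalGroup G] [TotallyDisconnectedSpace G]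

lemma t2space_of_td : T2Space G := by
  apply IsTopologicalGroup.t2Space_iff_one_closed.mpr
  have h : connectedComponent (1 : G) = {1} := connectedComponent_eq_singleton 1
  exact h ▸ isClosed_connectedComponent

variable {α : G →* G} {U : Subgroup G}

lemma seqU_isCompact (hα : Continuous α) (hUc : IsCompact (U : Set G))
    (hUo : IsOpen (U : Set G)) : ∀ n, IsCompact (seqU α U n : Set G) := by
  haveI : T2Space G := t2space_of_td
  intro n
  induction n with
  | zero => exact hUc
  | succ n ih =>
      have h1 : (seqU α U (n+1) : Set G) = (U : Set G) ∩ α '' (seqU α U n : Set G) := by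
        show ((U ⊓ Subgroup.map α (seqU α U n) : Subgroup G) : Set G) = _
        rw [Subgroup.coe_inf, Subgroup.coe_map]
      rw [h1]
      exact (ih.image hα).inter_left (U.isClosed_of_isOpen hUo)

/-- Key compactness fact: `U₊ ⊆ α(U₊)`. -/
lemma Uplus_subset_image (hα : Continuous α) (hUc : IsCompact (U : Set G))
    (hUo : IsOpen (U : Set G)) :
    (Uplus α U : Set G) ⊆ α '' (Uplus α U : Set G) := by
  haveI : T2Space G := t2space_of_td
  intro x hx
  have hx' : ∀ n, x ∈ seqU α U n := mem_Uplus.1 hx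
  set C : ℕ → Set G := fun n => (α ⁻¹' {x}) ∩ (seqU α U n : Set G) with hC
  have hne : ∀ n, (C n).Nonempty := by
    intro n
    have h2 : x ∈ U ⊓ Subgroup.map α (seqU α U n) := hx' (n+1)
    obtain ⟨y, hy, hyx⟩ := (Subgroup.mem_inf.1 h2).2
    refine ⟨y, ?_, hy⟩
    simp [hC, hyx]
  have hdec : ∀ n, C (n+1) ⊆ C n := fun n =>
    Set.inter_subset_inter_right _ (SetLike.coe_subset_coe.mpr (seqU_antitone n))
  have hcl : ∀ n, IsClosed (C n) := fun n =>
    (isClosed_singleton.preimage hα).inter (seqU_isCompact hα hUc hUo n).isClosed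
  have hcpt : IsCompact (C 0) :=
    (seqU_isCompact hα hUc hUo 0).inter_left (isClosed_singleton.preimage hα)
  obtain ⟨y, hy⟩ :=
    IsCompact.nonempty_iInter_of_sequence_nonempty_isCompact_isClosed C hdec hne hcpt hcl
  rw [Set.mem_iInter] at hy
  refine ⟨y, mem_Uplus.2 (fun n => (hy n).2), ?_⟩
  have := (hy 0).1
  simpa [hC] using this

end Top

/-! ### Powers -/

section Pow

variable [Group G] [TopologicalSpace G] [IsTopologicalGroup G] [TotallyDisconnectedSpace G]
variable {α : G →* G} {U : Subgroup G}

lemma Uplus_subset_iter_image (hα : Continuous α) (hUc : IsCompact (U : Set G))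
    (hUo : IsOpen (U : Set G)) :
    ∀ k, (Uplus α U : Set G) ⊆ iterHom α k '' (Uplus α U : Set G)
  | 0 => by
      intro x hx
      exact ⟨x, hx, rfl⟩
  | k + 1 => by
      intro x hx
      obtain ⟨y, hy, hyx⟩ := Uplus_subset_image hα hUc hUo hx
      obtain ⟨z, hz, hzy⟩ := Uplus_subset_iter_image hα hUc hUo k hy
      refine ⟨z, hz, ?_⟩
      rw [iterHom_succ']
      show α (iterHom α k z) = x
      rw [hzy, hyx]

lemma Uplus_le_seqU_pow (hα : Continuous α) (hUc : IsCompact (U : Set G))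
    (hUo : IsOpen (U : Set G)) (k : ℕ) :
    ∀ n, Uplus α U ≤ seqU (iterHom α k) U n
  | 0 => Uplus_le
  | n + 1 => by
      intro x hx
      refine Subgroup.mem_inf.2 ⟨Uplus_le hx, ?_⟩
      obtain ⟨y, hy, hyx⟩ := Uplus_subset_iter_image hα hUc hUo k hx
      exact ⟨y, Uplus_le_seqU_pow hα hUc hUo k n hy, hyx⟩

lemma Uplus_le_Uplus_pow (hα : Continuous α) (hUc : IsCompact (U : Set G))
    (hUo : IsOpen (U : Set G)) (k : ℕ) :
    Uplus α U ≤ Uplus (iterHom α k) U := fun _ hx =>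
  mem_Uplus.2 fun n => Uplus_le_seqU_pow hα hUc hUo k n hx

lemma Uminus_le_Uminus_pow (k : ℕ) : Uminus α U ≤ Uminus (iterHom α k) U := by
  intro x hx
  rw [mem_Uminus]
  intro n
  rw [iterHom_iterHom]
  exact mem_Uminus.1 hx (k * n)

lemma tidyAbove_pow (hα : Continuous α) (hUc : IsCompact (U : Set G))
    (hUo : IsOpen (U : Set G)) (k : ℕ) (h : TidyAbove α U) :
    TidyAbove (iterHom α k) U := by
  unfold TidyAbove at h ⊢
  apply Set.Subset.antisymm
  · intro x hx
    rw [h, Set.mem_mul] at hx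
    obtain ⟨a, ha, b, hb, rfl⟩ := hx
    exact Set.mul_mem_mul (Uplus_le_Uplus_pow hα hUc hUo k ha)
      (Uminus_le_Uminus_pow k hb)
  · intro x hx
    rw [Set.mem_mul] at hx
    obtain ⟨a, ha, b, hb, rfl⟩ := hx
    exact U.mul_mem (Uplus_le ha) (Uminus_le hb)

lemma mem_Umm {β : G →* G} {x : G} :
    x ∈ Umm β U ↔ ∃ n, iterHom β n x ∈ Uminus β U := by
  simp [Umm, Set.mem_iUnion, Set.mem_preimage]

/-! ### Tidy below for powers.

The key identity: `Umm (αᵏ) U = (Umm α U) * (Uminus (αᵏ) U)`, a product of a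
closed set and a compact set, hence closed. -/

/-- `Umm α U` absorbs right multiplication by elements of `U₋`. -/
lemma Umm_mul_Uminus_mem {x b : G} (hx : x ∈ Umm α U) (hb : b ∈ Uminus α U) :
    x * b ∈ Umm α U := by
  rw [mem_Umm] at hx ⊢
  obtain ⟨m, hm⟩ := hx
  exact ⟨m, by rw [map_mul]; exact (Uminus α U).mul_mem hm (iterHom_mem_Uminus hb m)⟩

/-- `Umm α U` is stable under preimages of `αᵏ`. -/
lemma mem_Umm_of_iter_mem {k : ℕ} {x : G} (hx : iterHom α k x ∈ Umm α U) :
    x ∈ Umm α U := by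
  rw [mem_Umm] at hx ⊢
  obtain ⟨m, hm⟩ := hx
  refine ⟨m + k, ?_⟩
  rw [iterHom_add_apply]
  exact hm

/-- Reversed tidy-above decomposition: `U = U₋ U₊`. -/
lemma exists_rev_decomp (h : TidyAbove α U) {z : G} (hz : z ∈ U) :
    ∃ b ∈ Uminus α U, ∃ a ∈ Uplus α U, b * a = z := by
  have hz' : (z⁻¹ : G) ∈ (Uplus α U : Set G) * (Uminus α U : Set G) := by
    rw [← h]
    exact U.inv_mem hz
  rw [Set.mem_mul] at hz'
  obtain ⟨a₁, ha₁, b₁, hb₁, hab⟩ := hz'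
  refine ⟨b₁⁻¹, (Uminus α U).inv_mem hb₁, a₁⁻¹, (Uplus α U).inv_mem ha₁, ?_⟩
  rw [← mul_inv_rev, hab, inv_inv]

/-- The absorption step: `(αᵏ)⁻¹(Umm α U * U₋(αᵏ)) ⊆ Umm α U * U₋(αᵏ)`. -/
lemma absorption (hα : Continuous α) (hUc : IsCompact (U : Set G))
    (hUo : IsOpen (U : Set G)) (h : TidyAbove α U) (k : ℕ) {x : G}
    (hx : iterHom α k x ∈ Umm α U * (Uminus (iterHom α k) U : Set G)) :
    x ∈ Umm α U * (Uminus (iterHom α k) U : Set G) := by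
  rw [Set.mem_mul] at hx
  obtain ⟨y, hy, z, hz, hyz⟩ := hx
  -- `z ∈ U₋(αᵏ) ⊆ U`; decompose `z = b * a` with `b ∈ U₋`, `a ∈ U₊`.
  have hzU : z ∈ U := Uminus_le hz
  obtain ⟨b, hb, a, ha, hba⟩ := exists_rev_decomp h hzU
  -- `a = b⁻¹ * z ∈ U₋(αᵏ)` as well.
  have haz : a ∈ Uminus (iterHom α k) U := by
    have : a = b⁻¹ * z := by rw [← hba]; group
    rw [this]
    exact (Uminus (iterHom α k) U).mul_mem
      ((Uminus (iterHom α k) U).inv_mem (Uminus_le_Uminus_pow k hb)) hz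
  -- pull `a` back through `αᵏ` inside `U₊`.
  obtain ⟨a', ha', haa'⟩ := Uplus_subset_iter_image hα hUc hUo k ha
  -- `a' ∈ U₋(αᵏ)` too.
  have ha'm : a' ∈ Uminus (iterHom α k) U := by
    rw [mem_Uminus]
    intro n
    match n with
    | 0 => exact Uplus_le ha'
    | n + 1 =>
        have h5 : iterHom (iterHom α k) (n + 1) a'
            = iterHom (iterHom α k) n (iterHom α k a') :=
          iterHom_add_apply (iterHom α k) n 1 a'
        rw [h5, haa']
        exact mem_Uminus.1 haz n
  -- `β (x * a'⁻¹) = y * b ∈ Umm α U`, hence `x * a'⁻¹ ∈ Umm α U`.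
  have hkey : iterHom α k (x * a'⁻¹) = y * b := by
    rw [map_mul, map_inv, haa']
    rw [← hyz, ← hba]
    group
  have hv : x * a'⁻¹ ∈ Umm α U := by
    apply mem_Umm_of_iter_mem (k := k)
    rw [hkey]
    exact Umm_mul_Uminus_mem hy hb
  refine ⟨x * a'⁻¹, hv, a', ha'm, ?_⟩
  group

/-- The main identity : `Umm (αᵏ) U = Umm α U * U₋(αᵏ)`. -/
lemma Umm_pow_eq (hα : Continuous α) (hUc : IsCompact (U : Set G))
    (hUo : IsOpen (U : Set G)) (h : TidyAbove α U) (k : ℕ) (hk : 1 ≤ k) :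
    Umm (iterHom α k) U = Umm α U * (Uminus (iterHom α k) U : Set G) := by
  apply Set.Subset.antisymm
  · intro x hx
    rw [mem_Umm] at hx
    obtain ⟨n, hn⟩ := hx
    induction n generalizing x with
    | zero =>
        refine ⟨1, ?_, x, hn, one_mul x⟩
        rw [mem_Umm]
        exact ⟨0, by simpa using (Uminus α U).one_mem⟩
    | succ n ih =>
        have h1 : iterHom (iterHom α k) n (iterHom α k x) ∈ Uminus (iterHom α k) U := by
          have h5 : iterHom (iterHom α k) (n + 1) x
              = iterHom (iterHom α k) n (iterHom α k x) :=
            iterHom_add_apply (iterHom α k) n 1 x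
          rw [← h5]
          exact hn
        exact absorption hα hUc hUo h k (ih h1)
  · intro x hx
    rw [Set.mem_mul] at hx
    obtain ⟨y, hy, z, hz, hyz⟩ := hx
    rw [mem_Umm] at hy ⊢
    obtain ⟨m, hm⟩ := hy
    refine ⟨m, ?_⟩
    rw [← hyz, map_mul]
    apply (Uminus (iterHom α k) U).mul_mem
    · apply Uminus_le_Uminus_pow
      rw [iterHom_iterHom]
      have hle : m ≤ k * m := Nat.le_mul_of_pos_left m hk
      have hEq : k * m = (k * m - m) + m := by omega
      rw [hEq, iterHom_add_apply]
      exact iterHom_mem_Uminus hm (k * m - m)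
    · exact iterHom_mem_Uminus hz m

lemma iterHom_continuous (hα : Continuous α) : ∀ n, Continuous (iterHom α n)
  | 0 => continuous_id
  | n + 1 => hα.comp (iterHom_continuous hα n)

lemma Uminus_isCompact (hα : Continuous α) (hUc : IsCompact (U : Set G))
    (hUo : IsOpen (U : Set G)) : IsCompact (Uminus α U : Set G) := by
  haveI : T2Space G := t2space_of_td
  have hcl : IsClosed (Uminus α U : Set G) := by
    have h1 : (Uminus α U : Set G) = ⋂ n, (iterHom α n) ⁻¹' (U : Set G) := by
      rw [Uminus, Subgroup.coe_iInf]
      simp [Subgroup.coe_comap]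
    rw [h1]
    exact isClosed_iInter fun n =>
      (U.isClosed_of_isOpen hUo).preimage (iterHom_continuous hα n)
  exact hUc.of_isClosed_subset hcl Uminus_le

lemma tidyBelow_pow (hα : Continuous α) (hUc : IsCompact (U : Set G))
    (hUo : IsOpen (U : Set G)) (hU : Tidy α U) (k : ℕ) (hk : 1 ≤ k) :
    TidyBelow (iterHom α k) U := by
  unfold TidyBelow
  rw [Umm_pow_eq hα hUc hUo hU.1 k hk]
  exact hU.2.mul_right_of_isCompact
    (Uminus_isCompact (iterHom_continuous hα k) hUc hUo)

end Pow

/-- If `U` is tidy for `α`, then `U` is tidy for `αᵏ` for all `k ≥ 1`. -/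
theorem tidy_pow [Group G] [TopologicalSpace G] [IsTopologicalGroup G]
    [TotallyDisconnectedSpace G] [LocallyCompactSpace G]
    (α : G →* G) (hα : Continuous α)
    (U : Subgroup G) (hUc : IsCompact (U : Set G)) (hUo : IsOpen (U : Set G))
    (hU : Tidy α U) :
    ∀ k : ℕ, 1 ≤ k → Tidy (iterHom α k) U := by
  intro k hk
  exact ⟨tidyAbove_pow hα hUc hUo k hU.1, tidyBelow_pow hα hUc hUo hU k hk⟩
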